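/- arXiv:2405.16151 — 2 statements merged into one kernel-verified Lean document; each statement's English description precedes it below -/
import Mathlib

section
/- Fix a dimension d ≥ 1. There exists a constant C₀ = C₀(d) > 0 such that for every integer ℓ ≥ 1 there is a function Φ_ℓ : ℤ^d × {1,…,d} → ℝ with the following three properties: (i) for every z ∈ ℤ^d, δ₀(z) − q_ℓ(z) = Σ_{i=1}^d (Φ_ℓ(z, i) − Φ_ℓ(z − e_i, i)); (ii) Φ_ℓ(z, i) = 0 for every i whenever z ∉ Λ_{2ℓ−1}^d; (iii) Σ_{i=1}^d Σ_{z ∈ ℤ^d} Φ_ℓ(z, i)² ≤ C₀ g_d(ℓ). -/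
open scoped BigOperators
open Classical

noncomputable section

/-- The box `Λ_ℓ^d = {0,1,…,ℓ-1}^d` in `ℤ^d`. -/
def inBox (d ℓ : ℕ) (z : Fin d → ℤ) : Prop := ∀ i, 0 ≤ z i ∧ z i < (ℓ : ℤ)

/-- The uniform weight `p_ℓ` on the box `Λ_ℓ^d`. -/
def pUnif (d ℓ : ℕ) (z : Fin d → ℤ) : ℝ :=
  if inBox d ℓ z then ((ℓ : ℝ) ^ d)⁻¹ else 0

/-- The convolution `q_ℓ = p_ℓ ∗ p_ℓ`. -/
def qConv (d ℓ : ℕ) (z : Fin d → ℤ) : ℝ :=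
  ∑' y : Fin d → ℤ, pUnif d ℓ (z - y) * pUnif d ℓ y

/-- `g_d(ℓ)`: `ℓ` if `d = 1`, `log ℓ` if `d = 2`, and `1` if `d ≥ 3`. -/
def gd (d ℓ : ℕ) : ℝ :=
  if d = 1 then (ℓ : ℝ) else if d = 2 then Real.log ℓ else 1


namespace Flow

variable (d : ℕ)

def boxF (L : ℕ) : Finset (Fin d → ℤ) := Fintype.piFinset fun _ => Finset.Icc 0 ((L:ℤ) - 1)

lemma mem_boxF {L : ℕ} {z : Fin d → ℤ} : z ∈ boxF d L ↔ inBox d L z := by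
  simp only [boxF, Fintype.mem_piFinset, Finset.mem_Icc, inBox]
  constructor <;> intro h i <;> have := h i <;> omega

lemma card_boxF (L : ℕ) : (boxF d L).card = L ^ d := by
  classical
  rw [boxF, Fintype.card_piFinset]
  simp [Int.card_Icc]

lemma pUnif_nonneg (ℓ : ℕ) (z : Fin d → ℤ) : 0 ≤ pUnif d ℓ z := by
  unfold pUnif; split <;> positivity

lemma pUnif_le (ℓ : ℕ) (z : Fin d → ℤ) : pUnif d ℓ z ≤ ((ℓ : ℝ) ^ d)⁻¹ := by
  unfold pUnif; split
  · exact le_rfl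
  · positivity

lemma pUnif_eq_zero {ℓ : ℕ} {z : Fin d → ℤ} (h : ¬ inBox d ℓ z) : pUnif d ℓ z = 0 := by
  simp [pUnif, h]

lemma sum_pUnif {ℓ : ℕ} (hℓ : 1 ≤ ℓ) : ∑ z ∈ boxF d ℓ, pUnif d ℓ z = 1 := by
  have h : ∀ z ∈ boxF d ℓ, pUnif d ℓ z = ((ℓ : ℝ) ^ d)⁻¹ := by
    intro z hz; simp [pUnif, (mem_boxF d).1 hz]
  rw [Finset.sum_congr rfl h, Finset.sum_const, card_boxF, nsmul_eq_mul]
  have : ((ℓ : ℝ)) ≠ 0 := by positivity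
  push_cast
  field_simp


lemma qConv_eq_sum (ℓ : ℕ) (z : Fin d → ℤ) :
    qConv d ℓ z = ∑ y ∈ boxF d ℓ, pUnif d ℓ (z - y) * pUnif d ℓ y := by
  refine tsum_eq_sum ?_
  intro y hy
  rw [pUnif_eq_zero d (fun h => hy ((mem_boxF d).2 h)), mul_zero]

lemma qConv_nonneg (ℓ : ℕ) (z : Fin d → ℤ) : 0 ≤ qConv d ℓ z := by
  rw [qConv_eq_sum]
  exact Finset.sum_nonneg fun y _ => mul_nonneg (pUnif_nonneg d _ _) (pUnif_nonneg d _ _)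

lemma qConv_le {ℓ : ℕ} (hℓ : 1 ≤ ℓ) (z : Fin d → ℤ) : qConv d ℓ z ≤ ((ℓ : ℝ) ^ d)⁻¹ := by
  rw [qConv_eq_sum]
  calc ∑ y ∈ boxF d ℓ, pUnif d ℓ (z - y) * pUnif d ℓ y
      ≤ ∑ y ∈ boxF d ℓ, ((ℓ : ℝ) ^ d)⁻¹ * pUnif d ℓ y := by
        refine Finset.sum_le_sum fun y _ => ?_
        exact mul_le_mul_of_nonneg_right (pUnif_le d ℓ _) (pUnif_nonneg d _ _)
    _ = ((ℓ : ℝ) ^ d)⁻¹ := by rw [← Finset.mul_sum, sum_pUnif d hℓ, mul_one]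

lemma qConv_supp {ℓ : ℕ} (hℓ : 1 ≤ ℓ) {z : Fin d → ℤ} (h : ¬ inBox d (2 * ℓ - 1) z) :
    qConv d ℓ z = 0 := by
  rw [qConv_eq_sum]
  refine Finset.sum_eq_zero fun y hy => ?_
  have hy' := (mem_boxF d).1 hy
  rw [pUnif_eq_zero d, zero_mul]
  intro hzy
  apply h
  intro i
  have h1 := hzy i
  have h2 := hy' i
  have h3 : ((2 * ℓ - 1 : ℕ) : ℤ) = 2 * (ℓ : ℤ) - 1 := by omega
  simp only [Pi.sub_apply] at h1
  constructor <;> omega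

lemma sum_shift {ℓ L : ℕ} (hℓ : 1 ≤ ℓ) (hL : 2 * ℓ - 1 ≤ L) {y : Fin d → ℤ}
    (hy : y ∈ boxF d ℓ) : ∑ z ∈ boxF d L, pUnif d ℓ (z - y) = 1 := by
  have hy' := (mem_boxF d).1 hy
  have hsub : (boxF d ℓ).image (fun w => w + y) ⊆ boxF d L := by
    intro z hz
    rcases Finset.mem_image.1 hz with ⟨w, hw, rfl⟩
    have hw' := (mem_boxF d).1 hw
    refine (mem_boxF d).2 fun i => ?_
    have h1 := hw' i
    have h2 := hy' i
    have hcast : (ℓ : ℤ) + (ℓ : ℤ) - 1 ≤ (L : ℤ) := by omega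
    simp only [Pi.add_apply]
    omega
  rw [← Finset.sum_subset hsub ?_]
  · rw [Finset.sum_image (fun a _ b _ h => by
      funext i
      have := congrFun h i
      simp only [Pi.add_apply] at this
      omega)]
    have he : ∀ w ∈ boxF d ℓ, pUnif d ℓ (w + y - y) = pUnif d ℓ w := by
      intro w _
      congr 1
      funext i
      simp
    rw [Finset.sum_congr rfl he, sum_pUnif d hℓ]
  · intro z hz hznot
    refine pUnif_eq_zero d fun hin => hznot ?_
    refine Finset.mem_image.2 ⟨z - y, (mem_boxF d).2 hin, ?_⟩
    funext i
    simp

lemma sum_qConv {ℓ L : ℕ} (hℓ : 1 ≤ ℓ) (hL : 2 * ℓ - 1 ≤ L) :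
    ∑ z ∈ boxF d L, qConv d ℓ z = 1 := by
  rw [Finset.sum_congr rfl fun z _ => qConv_eq_sum d ℓ z, Finset.sum_comm]
  have he : ∀ y ∈ boxF d ℓ, ∑ z ∈ boxF d L, pUnif d ℓ (z - y) * pUnif d ℓ y = pUnif d ℓ y := by
    intro y hy
    rw [← Finset.sum_mul, sum_shift d hℓ hL hy, one_mul]
  rw [Finset.sum_congr rfl he, sum_pUnif d hℓ]

lemma inBox_one_iff {z : Fin d → ℤ} : inBox d 1 z ↔ z = 0 := by
  constructor
  · intro h
    funext i
    have h1 := h i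
    simp only [Nat.cast_one] at h1
    have : z i = 0 := by omega
    simpa using this
  · rintro rfl i
    simp

lemma qConv_one (z : Fin d → ℤ) : qConv d 1 z = if z = 0 then 1 else 0 := by
  rw [qConv]
  rw [tsum_eq_single (0 : Fin d → ℤ) ?_]
  · rw [sub_zero]
    have h0 : pUnif d 1 (0 : Fin d → ℤ) = 1 := by
      simp [pUnif, (inBox_one_iff d).2 rfl]
    rw [h0, mul_one]
    by_cases hz : z = 0
    · simp [pUnif, hz, (inBox_one_iff d).2 rfl]
    · rw [pUnif_eq_zero d (fun h => hz ((inBox_one_iff d).1 h)), if_neg hz]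
  · intro y hy
    rw [pUnif_eq_zero d (fun h => hy ((inBox_one_iff d).1 h)), mul_zero]

/-! ### One-dimensional cdf -/

def p1 (L : ℕ) (n : ℤ) : ℝ := if 0 ≤ n ∧ n < (L : ℤ) then (L : ℝ)⁻¹ else 0

def cdf (L : ℕ) (n : ℤ) : ℝ := ((max 0 (min (n + 1) (L : ℤ))) : ℤ) / (L : ℝ)

lemma p1_nonneg (L : ℕ) (n : ℤ) : 0 ≤ p1 L n := by
  unfold p1; split <;> positivity

lemma p1_le (L : ℕ) (n : ℤ) : p1 L n ≤ (L : ℝ)⁻¹ := by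
  unfold p1; split
  · exact le_rfl
  · positivity

lemma p1_in {L : ℕ} {n : ℤ} (h : 0 ≤ n ∧ n < (L : ℤ)) : p1 L n = (L : ℝ)⁻¹ := if_pos h

lemma p1_out {L : ℕ} {n : ℤ} (h : ¬ (0 ≤ n ∧ n < (L : ℤ))) : p1 L n = 0 := if_neg h

lemma cdf_neg {L : ℕ} {n : ℤ} (h : n < 0) : cdf L n = 0 := by
  unfold cdf
  have : max 0 (min (n + 1) (L : ℤ)) = 0 := by omega
  rw [this]; simp

lemma cdf_big {L : ℕ} (hL : 1 ≤ L) {n : ℤ} (h : (L : ℤ) - 1 ≤ n) : cdf L n = 1 := by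
  unfold cdf
  have h1 : max 0 (min (n + 1) (L : ℤ)) = (L : ℤ) := by omega
  rw [h1]
  have : (L : ℝ) ≠ 0 := by positivity
  push_cast
  field_simp

lemma cdf_nonneg (L : ℕ) (n : ℤ) : 0 ≤ cdf L n := by
  unfold cdf
  have h1 : (0 : ℤ) ≤ max 0 (min (n + 1) (L : ℤ)) := le_max_left _ _
  have h2 : (0 : ℝ) ≤ ((max 0 (min (n + 1) (L : ℤ))) : ℤ) := by exact_mod_cast h1
  positivity

lemma cdf_le_one {L : ℕ} (hL : 1 ≤ L) (n : ℤ) : cdf L n ≤ 1 := by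
  unfold cdf
  have h1 : max 0 (min (n + 1) (L : ℤ)) ≤ (L : ℤ) := by omega
  have hL0 : (0 : ℝ) < (L : ℝ) := by positivity
  rw [div_le_one hL0]
  exact_mod_cast h1

lemma cdf_sub {L : ℕ} (hL : 1 ≤ L) (n : ℤ) : cdf L n - cdf L (n - 1) = p1 L n := by
  rcases lt_trichotomy n 0 with h | h | h
  · rw [cdf_neg h, cdf_neg (by omega), p1_out (by omega)]; ring
  · subst h
    have h1 : (1 : ℤ) ≤ (L : ℤ) := by exact_mod_cast hL
    have e0 : cdf L ((0 : ℤ) - 1) = 0 := cdf_neg (by omega)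
    have e1 : max (0 : ℤ) (min ((0 : ℤ) + 1) (L : ℤ)) = 1 := by
      rw [zero_add, min_eq_left h1, max_eq_right (by omega : (0:ℤ) ≤ 1)]
    rw [e0, p1_in ⟨le_rfl, by omega⟩, sub_zero]
    unfold cdf
    rw [e1]
    simp
  · by_cases h2 : n < (L : ℤ)
    · rw [p1_in ⟨by omega, h2⟩]
      unfold cdf
      have e1 : max 0 (min (n + 1) (L : ℤ)) = n + 1 := by omega
      have e2 : max 0 (min (n - 1 + 1) (L : ℤ)) = n := by omega
      rw [e1, e2]
      have : (L : ℝ) ≠ 0 := by positivity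
      push_cast
      field_simp
      ring
    · rw [p1_out (by omega), cdf_big hL (by omega), cdf_big hL (by omega)]; ring

/-! ### The sequential flow -/

def Psi (d L : ℕ) (f : (Fin d → ℤ) → ℝ) (z : Fin d → ℤ) (i : Fin d) : ℝ :=
  (∏ j ∈ Finset.univ.filter (fun j : Fin d => (j : ℕ) < (i : ℕ)), p1 L (z j)) *
    ∑ y ∈ boxF d L, f y *
      (if ∀ j : Fin d, (i : ℕ) < (j : ℕ) → y j = z j then
        (if y i ≤ z i then (1 : ℝ) else 0) - cdf L (z i) else 0)

def Bfun (d L : ℕ) (f : (Fin d → ℤ) → ℝ) (z : Fin d → ℤ) (k : ℕ) : ℝ :=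
  (∏ j ∈ Finset.univ.filter (fun j : Fin d => (j : ℕ) < k), p1 L (z j)) *
    ∑ y ∈ (boxF d L).filter (fun y => ∀ j : Fin d, k ≤ (j : ℕ) → y j = z j), f y

lemma cfac_step {L : ℕ} (hL : 1 ≤ L) (a zi : ℤ) :
    ((if a ≤ zi then (1 : ℝ) else 0) - cdf L zi)
      - ((if a ≤ zi - 1 then (1 : ℝ) else 0) - cdf L (zi - 1))
      = (if a = zi then (1 : ℝ) else 0) - p1 L zi := by
  have h1 := cdf_sub hL zi
  have h2 : (if a ≤ zi then (1 : ℝ) else 0) - (if a ≤ zi - 1 then (1 : ℝ) else 0)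
      = (if a = zi then (1 : ℝ) else 0) := by
    rcases lt_trichotomy a zi with h | h | h
    · rw [if_pos h.le, if_pos (by omega), if_neg (by omega)]; ring
    · rw [if_pos h.le, if_neg (by omega), if_pos h]; ring
    · rw [if_neg (by omega), if_neg (by omega), if_neg (by omega)]; ring
  linarith

lemma Bstep (d L : ℕ) (hL : 1 ≤ L) (f : (Fin d → ℤ) → ℝ) (z : Fin d → ℤ) (i : Fin d) :
    Psi d L f z i - Psi d L f (fun j => z j - if j = i then 1 else 0) i
      = Bfun d L f z (i : ℕ) - Bfun d L f z ((i : ℕ) + 1) := by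
  classical
  set z' : Fin d → ℤ := fun j => z j - if j = i then 1 else 0 with hz'
  have hz'eq : ∀ j : Fin d, j ≠ i → z' j = z j := by
    intro j hj; simp [hz', hj]
  have hz'i : z' i = z i - 1 := by simp [hz']
  -- the products agree
  have hprod : (∏ j ∈ Finset.univ.filter (fun j : Fin d => (j : ℕ) < (i : ℕ)), p1 L (z' j))
      = ∏ j ∈ Finset.univ.filter (fun j : Fin d => (j : ℕ) < (i : ℕ)), p1 L (z j) := by
    refine Finset.prod_congr rfl fun j hj => ?_
    rw [hz'eq j (by
      intro h; subst h
      simp only [Finset.mem_filter] at hj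
      omega)]
  -- difference of the two sums
  have hdiff : Psi d L f z i - Psi d L f z' i
      = (∏ j ∈ Finset.univ.filter (fun j : Fin d => (j : ℕ) < (i : ℕ)), p1 L (z j)) *
          ∑ y ∈ boxF d L, f y *
            (if ∀ j : Fin d, (i : ℕ) < (j : ℕ) → y j = z j then
              (if y i = z i then (1 : ℝ) else 0) - p1 L (z i) else 0) := by
    unfold Psi
    rw [hprod, ← mul_sub, ← Finset.sum_sub_distrib]
    congr 1
    refine Finset.sum_congr rfl fun y hy => ?_
    rw [← mul_sub]
    congr 1
    have hcond : (∀ j : Fin d, (i : ℕ) < (j : ℕ) → y j = z' j) ↔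
        (∀ j : Fin d, (i : ℕ) < (j : ℕ) → y j = z j) := by
      constructor <;> intro h j hj <;>
        [rw [← hz'eq j (by intro he; subst he; omega)]; rw [hz'eq j (by intro he; subst he; omega)]]
        <;> exact h j hj
    by_cases hc : ∀ j : Fin d, (i : ℕ) < (j : ℕ) → y j = z j
    · rw [if_pos hc, if_pos (hcond.mpr hc), if_pos hc, hz'i]
      exact cfac_step hL (y i) (z i)
    · rw [if_neg hc, if_neg (fun h => hc (hcond.mp h)), if_neg hc]; ring
  rw [hdiff]
  -- split the sum
  have hsplit : ∑ y ∈ boxF d L, f y *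
        (if ∀ j : Fin d, (i : ℕ) < (j : ℕ) → y j = z j then
          (if y i = z i then (1 : ℝ) else 0) - p1 L (z i) else 0)
      = (∑ y ∈ (boxF d L).filter (fun y => ∀ j : Fin d, (i : ℕ) ≤ (j : ℕ) → y j = z j), f y)
        - p1 L (z i) *
          ∑ y ∈ (boxF d L).filter (fun y => ∀ j : Fin d, (i : ℕ) < (j : ℕ) → y j = z j), f y := by
    have e1 : ∀ y ∈ boxF d L, f y *
        (if ∀ j : Fin d, (i : ℕ) < (j : ℕ) → y j = z j then
          (if y i = z i then (1 : ℝ) else 0) - p1 L (z i) else 0)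
        = (if ∀ j : Fin d, (i : ℕ) < (j : ℕ) → y j = z j then
            f y * ((if y i = z i then (1 : ℝ) else 0) - p1 L (z i)) else 0) := by
      intro y _; rw [mul_ite, mul_zero]
    rw [Finset.sum_congr rfl e1, ← Finset.sum_filter]
    have e2 : ∀ y ∈ (boxF d L).filter (fun y => ∀ j : Fin d, (i : ℕ) < (j : ℕ) → y j = z j),
        f y * ((if y i = z i then (1 : ℝ) else 0) - p1 L (z i))
        = (if y i = z i then f y else 0) - f y * p1 L (z i) := by
      intro y _; rw [mul_sub, mul_ite, mul_one, mul_zero]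
    rw [Finset.sum_congr rfl e2, Finset.sum_sub_distrib, ← Finset.sum_filter,
      Finset.filter_filter, ← Finset.sum_mul]
    have e3 : (boxF d L).filter
        (fun y => (∀ j : Fin d, (i : ℕ) < (j : ℕ) → y j = z j) ∧ y i = z i)
        = (boxF d L).filter (fun y => ∀ j : Fin d, (i : ℕ) ≤ (j : ℕ) → y j = z j) := by
      refine Finset.filter_congr fun y _ => ?_
      constructor
      · rintro ⟨h1, h2⟩ j hj
        rcases Nat.eq_or_lt_of_le hj with he | hlt
        · have : j = i := Fin.ext he.symm
          rw [this]; exact h2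
        · exact h1 j hlt
      · intro h
        exact ⟨fun j hj => h j hj.le, h i le_rfl⟩
    rw [e3]
    ring
  rw [hsplit]
  -- identify with Bfun
  have hBsucc : Bfun d L f z ((i : ℕ) + 1)
      = ((∏ j ∈ Finset.univ.filter (fun j : Fin d => (j : ℕ) < (i : ℕ)), p1 L (z j)) * p1 L (z i)) *
        ∑ y ∈ (boxF d L).filter (fun y => ∀ j : Fin d, (i : ℕ) < (j : ℕ) → y j = z j), f y := by
    unfold Bfun
    have hins : Finset.univ.filter (fun j : Fin d => (j : ℕ) < (i : ℕ) + 1)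
        = insert i (Finset.univ.filter (fun j : Fin d => (j : ℕ) < (i : ℕ))) := by
      ext j
      simp only [Finset.mem_filter, Finset.mem_univ, true_and, Finset.mem_insert, Fin.ext_iff]
      omega
    rw [hins, Finset.prod_insert (by simp)]
    have hcond : (boxF d L).filter (fun y => ∀ j : Fin d, (i : ℕ) + 1 ≤ (j : ℕ) → y j = z j)
        = (boxF d L).filter (fun y => ∀ j : Fin d, (i : ℕ) < (j : ℕ) → y j = z j) := by
      refine Finset.filter_congr fun y _ => ?_
      constructor <;> intro h j hj <;> exact h j (by omega)
    rw [hcond]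
    ring
  rw [hBsucc]
  unfold Bfun
  ring

lemma Bfun_zero (d L : ℕ) (f : (Fin d → ℤ) → ℝ) (z : Fin d → ℤ)
    (hsupp : ∀ w, ¬ inBox d L w → f w = 0) : Bfun d L f z 0 = f z := by
  unfold Bfun
  have h1 : Finset.univ.filter (fun j : Fin d => (j : ℕ) < 0) = ∅ := by
    ext j; simp
  rw [h1, Finset.prod_empty, one_mul]
  have h2 : (boxF d L).filter (fun y => ∀ j : Fin d, 0 ≤ (j : ℕ) → y j = z j)
      = (boxF d L).filter (fun y => y = z) := by
    refine Finset.filter_congr fun y _ => ?_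
    constructor
    · intro h; funext j; exact h j (Nat.zero_le _)
    · rintro rfl; intro j _; rfl
  rw [h2, Finset.filter_eq']
  by_cases hz : z ∈ boxF d L
  · rw [if_pos hz, Finset.sum_singleton]
  · rw [if_neg hz, Finset.sum_empty]
    exact (hsupp z fun h => hz ((mem_boxF d).2 h)).symm

lemma Bfun_top (d L : ℕ) (f : (Fin d → ℤ) → ℝ) (z : Fin d → ℤ)
    (hsum : ∑ y ∈ boxF d L, f y = 0) : Bfun d L f z d = 0 := by
  unfold Bfun
  have h2 : (boxF d L).filter (fun y => ∀ j : Fin d, d ≤ (j : ℕ) → y j = z j) = boxF d L := by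
    refine Finset.filter_true_of_mem fun y _ => fun j hj => absurd j.isLt (by omega)
  rw [h2, hsum, mul_zero]

lemma Psi_div (d L : ℕ) (hL : 1 ≤ L) (f : (Fin d → ℤ) → ℝ)
    (hsupp : ∀ w, ¬ inBox d L w → f w = 0) (hsum : ∑ y ∈ boxF d L, f y = 0)
    (z : Fin d → ℤ) :
    f z = ∑ i : Fin d, (Psi d L f z i - Psi d L f (fun j => z j - if j = i then 1 else 0) i) := by
  rw [Finset.sum_congr rfl fun i _ => Bstep d L hL f z i]
  rw [Fin.sum_univ_eq_sum_range (fun k => Bfun d L f z k - Bfun d L f z (k + 1)) d]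
  rw [Finset.sum_range_sub' (fun k => Bfun d L f z k) d]
  rw [Bfun_zero d L f z hsupp, Bfun_top d L f z hsum, sub_zero]

lemma Psi_supp (d L : ℕ) (hL : 1 ≤ L) (f : (Fin d → ℤ) → ℝ) (z : Fin d → ℤ)
    (hz : ¬ inBox d L z) (i : Fin d) : Psi d L f z i = 0 := by
  obtain ⟨j0, hj0⟩ := not_forall.1 hz
  rcases Nat.lt_trichotomy (j0 : ℕ) (i : ℕ) with hlt | heq | hgt
  · unfold Psi
    rw [Finset.prod_eq_zero (i := j0) (Finset.mem_filter.2 ⟨Finset.mem_univ _, hlt⟩) (p1_out hj0), zero_mul]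
  · have hji : j0 = i := Fin.ext heq
    subst hji
    unfold Psi
    rw [Finset.sum_eq_zero, mul_zero]
    intro y hy
    have hy' := (mem_boxF d).1 hy j0
    have hfac : (if y j0 ≤ z j0 then (1 : ℝ) else 0) - cdf L (z j0) = 0 := by
      by_cases hneg : z j0 < 0
      · rw [cdf_neg hneg, if_neg (by omega)]; ring
      · have hge : (L : ℤ) ≤ z j0 := by omega
        rw [cdf_big hL (by omega), if_pos (by omega)]; ring
    by_cases hcond : ∀ j : Fin d, (j0 : ℕ) < (j : ℕ) → y j = z j
    · rw [if_pos hcond, hfac, mul_zero]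
    · rw [if_neg hcond, mul_zero]
  · unfold Psi
    rw [Finset.sum_eq_zero, mul_zero]
    intro y hy
    have hy' := (mem_boxF d).1 hy j0
    rw [if_neg, mul_zero]
    intro hcond
    have hyz := hcond j0 hgt
    omega

lemma prod_p1_eq (d L : ℕ) (i : Fin d) (z : Fin d → ℤ) (hz : inBox d L z) :
    (∏ j ∈ Finset.univ.filter (fun j : Fin d => (j : ℕ) < (i : ℕ)), p1 L (z j))
      = ((L : ℝ)⁻¹) ^ (i : ℕ) := by
  rw [Finset.prod_congr rfl fun j _ => p1_in (hz j), Finset.prod_const]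
  congr 1
  have h : Finset.univ.filter (fun j : Fin d => (j : ℕ) < (i : ℕ)) = Finset.Iio i := by
    ext j
    simp only [Finset.mem_filter, Finset.mem_univ, true_and, Finset.mem_Iio]
    exact Fin.lt_def.symm
  rw [h, Fin.card_Iio]

lemma card_cond_le (d L : ℕ) (i : Fin d) (z : Fin d → ℤ) :
    ((boxF d L).filter (fun y => ∀ j : Fin d, (i : ℕ) < (j : ℕ) → y j = z j)).card
      ≤ L ^ ((i : ℕ) + 1) := by
  classical
  have hsub : (boxF d L).filter (fun y => ∀ j : Fin d, (i : ℕ) < (j : ℕ) → y j = z j)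
      ⊆ Fintype.piFinset (fun j : Fin d =>
          if (j : ℕ) ≤ (i : ℕ) then Finset.Icc 0 ((L : ℤ) - 1) else {z j}) := by
    intro y hy
    rw [Finset.mem_filter] at hy
    rw [Fintype.mem_piFinset]
    intro j
    by_cases hj : (j : ℕ) ≤ (i : ℕ)
    · rw [if_pos hj]
      exact (Fintype.mem_piFinset.1 hy.1) j
    · rw [if_neg hj, Finset.mem_singleton]
      exact hy.2 j (by omega)
  refine le_trans (Finset.card_le_card hsub) ?_
  rw [Fintype.card_piFinset]
  have e : ∀ j : Fin d,
      ((if (j : ℕ) ≤ (i : ℕ) then Finset.Icc (0 : ℤ) ((L : ℤ) - 1) else {z j}) : Finset ℤ).card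
        = if (j : ℕ) ≤ (i : ℕ) then L else 1 := by
    intro j
    by_cases hj : (j : ℕ) ≤ (i : ℕ)
    · rw [if_pos hj, if_pos hj, Int.card_Icc]
      omega
    · rw [if_neg hj, if_neg hj, Finset.card_singleton]
  rw [Finset.prod_congr rfl fun j _ => e j, Finset.prod_ite, Finset.prod_const,
    Finset.prod_const, one_pow, mul_one]
  have h : Finset.univ.filter (fun j : Fin d => (j : ℕ) ≤ (i : ℕ)) = Finset.Iic i := by
    ext j
    simp only [Finset.mem_filter, Finset.mem_univ, true_and, Finset.mem_Iic]
    exact Fin.le_def.symm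
  rw [h, Fin.card_Iic]

lemma Psi_bound (d L : ℕ) (hL : 1 ≤ L) (f : (Fin d → ℤ) → ℝ) (M : ℝ)
    (hM : ∀ w, |f w| ≤ M) (z : Fin d → ℤ) (i : Fin d) :
    |Psi d L f z i| ≤ (L : ℝ) * M := by
  have hM0 : 0 ≤ M := le_trans (abs_nonneg _) (hM z)
  have hL1 : (1 : ℝ) ≤ (L : ℝ) := by exact_mod_cast hL
  have hL0 : (0 : ℝ) < (L : ℝ) := by linarith
  by_cases hz : inBox d L z
  · unfold Psi
    rw [abs_mul]
    have h1 : |∏ j ∈ Finset.univ.filter (fun j : Fin d => (j : ℕ) < (i : ℕ)), p1 L (z j)|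
        = ((L : ℝ)⁻¹) ^ (i : ℕ) := by
      rw [prod_p1_eq d L i z hz]
      exact abs_of_nonneg (by positivity)
    have h2 : |∑ y ∈ boxF d L, f y *
        (if ∀ j : Fin d, (i : ℕ) < (j : ℕ) → y j = z j then
          (if y i ≤ z i then (1 : ℝ) else 0) - cdf L (z i) else 0)|
        ≤ (L : ℝ) ^ ((i : ℕ) + 1) * M := by
      refine le_trans (Finset.abs_sum_le_sum_abs _ _) ?_
      have step : ∀ y ∈ boxF d L, |f y *
          (if ∀ j : Fin d, (i : ℕ) < (j : ℕ) → y j = z j then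
            (if y i ≤ z i then (1 : ℝ) else 0) - cdf L (z i) else 0)|
          ≤ (if ∀ j : Fin d, (i : ℕ) < (j : ℕ) → y j = z j then |f y| else 0) := by
        intro y _
        by_cases hcond : ∀ j : Fin d, (i : ℕ) < (j : ℕ) → y j = z j
        · rw [if_pos hcond, if_pos hcond, abs_mul]
          have hc1 := cdf_nonneg L (z i)
          have hc2 := cdf_le_one hL (z i)
          have habs : |(if y i ≤ z i then (1 : ℝ) else 0) - cdf L (z i)| ≤ 1 := by
            rw [abs_le]
            by_cases hle : y i ≤ z i
            · rw [if_pos hle]; constructor <;> linarith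
            · rw [if_neg hle]; constructor <;> linarith
          calc |f y| * |(if y i ≤ z i then (1 : ℝ) else 0) - cdf L (z i)|
              ≤ |f y| * 1 := mul_le_mul_of_nonneg_left habs (abs_nonneg _)
            _ = |f y| := mul_one _
        · rw [if_neg hcond, if_neg hcond, mul_zero, abs_zero]
      refine le_trans (Finset.sum_le_sum step) ?_
      rw [← Finset.sum_filter]
      have hcard := card_cond_le d L i z
      calc ∑ y ∈ (boxF d L).filter
            (fun y => ∀ j : Fin d, (i : ℕ) < (j : ℕ) → y j = z j), |f y|
          ≤ ((boxF d L).filter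
            (fun y => ∀ j : Fin d, (i : ℕ) < (j : ℕ) → y j = z j)).card • M :=
            Finset.sum_le_card_nsmul _ _ M fun y _ => hM y
        _ = (((boxF d L).filter
            (fun y => ∀ j : Fin d, (i : ℕ) < (j : ℕ) → y j = z j)).card : ℝ) * M := by
            rw [nsmul_eq_mul]
        _ ≤ (L : ℝ) ^ ((i : ℕ) + 1) * M := by
            refine mul_le_mul_of_nonneg_right ?_ hM0
            calc (((boxF d L).filter
                (fun y => ∀ j : Fin d, (i : ℕ) < (j : ℕ) → y j = z j)).card : ℝ)
                ≤ ((L ^ ((i : ℕ) + 1) : ℕ) : ℝ) := by exact_mod_cast hcard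
              _ = (L : ℝ) ^ ((i : ℕ) + 1) := by push_cast; ring
    rw [h1]
    calc ((L : ℝ)⁻¹) ^ (i : ℕ) * |∑ y ∈ boxF d L, f y *
          (if ∀ j : Fin d, (i : ℕ) < (j : ℕ) → y j = z j then
            (if y i ≤ z i then (1 : ℝ) else 0) - cdf L (z i) else 0)|
        ≤ ((L : ℝ)⁻¹) ^ (i : ℕ) * ((L : ℝ) ^ ((i : ℕ) + 1) * M) := by
          exact mul_le_mul_of_nonneg_left h2 (by positivity)
      _ = (L : ℝ) * M := by
          rw [pow_succ']
          rw [inv_pow]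
          field_simp
  · rw [Psi_supp d L hL f z hz i, abs_zero]
    positivity

lemma seqflow (d L : ℕ) (hL : 1 ≤ L) (f : (Fin d → ℤ) → ℝ) (M : ℝ)
    (hsupp : ∀ w, ¬ inBox d L w → f w = 0) (hsum : ∑ y ∈ boxF d L, f y = 0)
    (hM : ∀ w, |f w| ≤ M) :
    ∃ Ψ : (Fin d → ℤ) → Fin d → ℝ,
      (∀ z, f z = ∑ i : Fin d, (Ψ z i - Ψ (fun j => z j - if j = i then 1 else 0) i)) ∧
      (∀ z, ¬ inBox d L z → ∀ i, Ψ z i = 0) ∧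
      (∀ z i, |Ψ z i| ≤ (L : ℝ) * M) := by
  exact ⟨Psi d L f, fun z => Psi_div d L hL f hsupp hsum z,
    fun z hz i => Psi_supp d L hL f z hz i,
    fun z i => Psi_bound d L hL f M hM z i⟩

/-! ### The multiscale weight -/

def Wfun (d : ℕ) : ℕ → ℝ
  | ℓ =>
    if h : ℓ ≤ 1 then 0
    else Wfun d ((ℓ + 1) / 2) + (ℓ : ℝ) ^ 2 / (ℓ : ℝ) ^ d
  termination_by ℓ => ℓ
  decreasing_by omega

lemma Wfun_small {d ℓ : ℕ} (h : ℓ ≤ 1) : Wfun d ℓ = 0 := by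
  rw [Wfun, dif_pos h]

lemma Wfun_step {d ℓ : ℕ} (h : 2 ≤ ℓ) :
    Wfun d ℓ = Wfun d ((ℓ + 1) / 2) + (ℓ : ℝ) ^ 2 / (ℓ : ℝ) ^ d := by
  rw [Wfun, dif_neg (by omega)]

lemma Wfun_one_le (ℓ : ℕ) : Wfun 1 ℓ ≤ 4 * (ℓ : ℝ) := by
  induction ℓ using Nat.strong_induction_on with
  | _ ℓ ih =>
    by_cases h : ℓ ≤ 1
    · rw [Wfun_small h]; positivity
    · have h2 : 2 ≤ ℓ := by omega
      rw [Wfun_step h2]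
      have hm : (ℓ + 1) / 2 < ℓ := by omega
      have ihm := ih _ hm
      have hnat : 4 * ((ℓ + 1) / 2) ≤ 3 * ℓ := by omega
      have hcast : 4 * (((ℓ + 1) / 2 : ℕ) : ℝ) ≤ 3 * (ℓ : ℝ) := by exact_mod_cast hnat
      have hl0 : (0 : ℝ) < (ℓ : ℝ) := by positivity
      have he : (ℓ : ℝ) ^ 2 / (ℓ : ℝ) ^ 1 = (ℓ : ℝ) := by
        field_simp
      rw [he]
      linarith

lemma Wfun_two_le (ℓ : ℕ) (hℓ : 1 ≤ ℓ) : Wfun 2 ℓ ≤ 4 * Real.log ℓ := by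
  induction ℓ using Nat.strong_induction_on with
  | _ ℓ ih =>
    by_cases h : ℓ ≤ 1
    · have : ℓ = 1 := by omega
      subst this
      rw [Wfun_small le_rfl]
      simp
    · have h2 : 2 ≤ ℓ := by omega
      rw [Wfun_step h2]
      set m := (ℓ + 1) / 2 with hm
      have hmlt : m < ℓ := by omega
      have hm1 : 1 ≤ m := by omega
      have ihm := ih m hmlt hm1
      have hl0 : (0 : ℝ) < (ℓ : ℝ) := by positivity
      have hm0 : (0 : ℝ) < (m : ℝ) := by positivity
      have he : (ℓ : ℝ) ^ 2 / (ℓ : ℝ) ^ 2 = 1 := by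
        field_simp
      rw [he]
      -- key: 1 ≤ 4 * (log ℓ - log m)
      have hnat : 4 * m ≤ 3 * ℓ := by omega
      have hcast : 4 * (m : ℝ) ≤ 3 * (ℓ : ℝ) := by exact_mod_cast hnat
      have hratio : (4 : ℝ) / 3 ≤ (ℓ : ℝ) / (m : ℝ) := by
        rw [div_le_div_iff₀ (by norm_num) hm0]
        linarith
      have hrpos : (0 : ℝ) < (ℓ : ℝ) / (m : ℝ) := by positivity
      have hpow : ((4 : ℝ) / 3) ^ 4 ≤ ((ℓ : ℝ) / (m : ℝ)) ^ 4 :=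
        pow_le_pow_left₀ (by norm_num) hratio 4
      have hexp : Real.exp 1 ≤ ((ℓ : ℝ) / (m : ℝ)) ^ 4 := by
        have := Real.exp_one_lt_d9
        have h43 : Real.exp 1 ≤ ((4 : ℝ) / 3) ^ 4 := by
          nlinarith [Real.exp_one_lt_d9]
        linarith
      have hlog : 1 ≤ Real.log (((ℓ : ℝ) / (m : ℝ)) ^ 4) :=
        (Real.le_log_iff_exp_le (by positivity)).2 (by simpa using hexp)
      rw [Real.log_pow, Real.log_div (ne_of_gt hl0) (ne_of_gt hm0)] at hlog
      push_cast at hlog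
      linarith

lemma Wfun_big_le (d : ℕ) (hd : 3 ≤ d) (ℓ : ℕ) (hℓ : 1 ≤ ℓ) :
    Wfun d ℓ ≤ 12 - 12 / (ℓ : ℝ) := by
  induction ℓ using Nat.strong_induction_on with
  | _ ℓ ih =>
    by_cases h : ℓ ≤ 1
    · have : ℓ = 1 := by omega
      subst this
      rw [Wfun_small le_rfl]
      norm_num
    · have h2 : 2 ≤ ℓ := by omega
      rw [Wfun_step h2]
      set m := (ℓ + 1) / 2 with hm
      have hmlt : m < ℓ := by omega
      have hm1 : 1 ≤ m := by omega
      have ihm := ih m hmlt hm1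
      have hl0 : (0 : ℝ) < (ℓ : ℝ) := by positivity
      have hm0 : (0 : ℝ) < (m : ℝ) := by positivity
      have hterm : (ℓ : ℝ) ^ 2 / (ℓ : ℝ) ^ d ≤ 1 / (ℓ : ℝ) := by
        have hl1 : (1 : ℝ) ≤ (ℓ : ℝ) := by exact_mod_cast (by omega : 1 ≤ ℓ)
        have hpow : (ℓ : ℝ) ^ 3 ≤ (ℓ : ℝ) ^ d := pow_le_pow_right₀ hl1 hd
        have e3 : (ℓ : ℝ) ^ 2 / (ℓ : ℝ) ^ 3 = 1 / (ℓ : ℝ) := by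
          field_simp
        calc (ℓ : ℝ) ^ 2 / (ℓ : ℝ) ^ d ≤ (ℓ : ℝ) ^ 2 / (ℓ : ℝ) ^ 3 := by
              apply div_le_div_of_nonneg_left (by positivity) (by positivity) hpow
          _ = 1 / (ℓ : ℝ) := e3
      have hnat : 13 * m ≤ 12 * ℓ := by omega
      have hcast : 13 * (m : ℝ) ≤ 12 * (ℓ : ℝ) := by exact_mod_cast hnat
      have hkey : 1 / (ℓ : ℝ) + 12 / (ℓ : ℝ) ≤ 12 / (m : ℝ) := by
        rw [← add_div, div_le_div_iff₀ hl0 hm0]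
        linarith
      linarith

lemma gd_nonneg (d ℓ : ℕ) (hℓ : 1 ≤ ℓ) : 0 ≤ gd d ℓ := by
  unfold gd
  split
  · positivity
  · split
    · exact Real.log_nonneg (by exact_mod_cast hℓ)
    · norm_num

lemma Wfun_le_gd (d : ℕ) (hd : 1 ≤ d) (ℓ : ℕ) (hℓ : 1 ≤ ℓ) :
    Wfun d ℓ ≤ 12 * gd d ℓ := by
  unfold gd
  rcases Nat.lt_or_ge d 3 with h3 | h3
  · interval_cases d
    · rw [if_pos rfl]
      have := Wfun_one_le ℓ
      linarith
    · rw [if_neg (by norm_num), if_pos rfl]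
      have := Wfun_two_le ℓ hℓ
      have hlog0 : 0 ≤ Real.log ℓ := Real.log_nonneg (by exact_mod_cast hℓ)
      linarith
  · rw [if_neg (by omega), if_neg (by omega), mul_one]
    have h12 := Wfun_big_le d h3 ℓ hℓ
    have hl0 : (0 : ℝ) < (ℓ : ℝ) := by positivity
    have : 0 ≤ 12 / (ℓ : ℝ) := by positivity
    linarith

/-! ### Assembly -/

lemma inBox_mono {a b : ℕ} (hab : a ≤ b) {z : Fin d → ℤ} (hz : inBox d a z) :
    inBox d b z := by
  intro i
  have h1 := hz i
  have h2 : (a : ℤ) ≤ (b : ℤ) := by exact_mod_cast hab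
  omega

lemma tsum_box {L : ℕ} (g : (Fin d → ℤ) → ℝ) (h : ∀ z, ¬ inBox d L z → g z = 0) :
    ∑' z, g z = ∑ z ∈ boxF d L, g z :=
  tsum_eq_sum fun z hz => h z fun hin => hz ((mem_boxF d).2 hin)

end Flow

def C1val (d : ℕ) : ℝ := (d : ℝ) * 2 ^ (2 * d + 4)

def C2val (d : ℕ) : ℝ := C1val d * 2 ^ (d + 3) + (d : ℝ) * 2 ^ (3 * d + 4)

namespace Flow

lemma C1val_nonneg (d : ℕ) : 0 ≤ C1val d := by unfold C1val; positivity

lemma C2val_nonneg (d : ℕ) : 0 ≤ C2val d := by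
  unfold C2val
  have := C1val_nonneg d
  positivity

set_option maxHeartbeats 2000000 in
lemma main_ind (d : ℕ) (hd : 1 ≤ d) (ℓ : ℕ) :
    1 ≤ ℓ →
    ∃ Φ : (Fin d → ℤ) → Fin d → ℝ,
      (∀ z : Fin d → ℤ,
        (if z = 0 then (1 : ℝ) else 0) - qConv d ℓ z
          = ∑ i : Fin d, (Φ z i - Φ (fun j => z j - if j = i then 1 else 0) i)) ∧
      (∀ z : Fin d → ℤ, ¬ inBox d (2 * ℓ - 1) z → ∀ i : Fin d, Φ z i = 0) ∧
      (∑ i : Fin d, ∑' z : Fin d → ℤ, |Φ z i| ≤ C1val d * ℓ) ∧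
      (∑ i : Fin d, ∑' z : Fin d → ℤ, (Φ z i) ^ 2 ≤ C2val d * Wfun d ℓ) := by
  induction ℓ using Nat.strong_induction_on with
  | _ ℓ ih =>
  intro hℓ
  by_cases hb : ℓ ≤ 1
  · -- base case ℓ = 1
    have hℓ1 : ℓ = 1 := by omega
    subst hℓ1
    refine ⟨fun _ _ => 0, ?_, ?_, ?_, ?_⟩
    · intro z
      rw [qConv_one d z]
      simp
    · intro z _ i; rfl
    · calc ∑ i : Fin d, ∑' z : Fin d → ℤ,
            |(fun (_ : Fin d → ℤ) (_ : Fin d) => (0 : ℝ)) z i| = 0 := by simp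
        _ ≤ C1val d * ((1 : ℕ) : ℝ) := mul_nonneg (C1val_nonneg d) (by norm_num)
    · calc ∑ i : Fin d, ∑' z : Fin d → ℤ,
            ((fun (_ : Fin d → ℤ) (_ : Fin d) => (0 : ℝ)) z i) ^ 2 = 0 := by simp
        _ ≤ C2val d * Wfun d 1 := by rw [Wfun_small le_rfl, mul_zero]
  · -- inductive step
    have h2 : 2 ≤ ℓ := by omega
    set m := (ℓ + 1) / 2 with hmdef
    have hm1 : 1 ≤ m := by omega
    have hmlt : m < ℓ := by omega
    have hle2m : ℓ ≤ 2 * m := by omega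
    have h2m1 : 2 * m - 1 ≤ 2 * ℓ - 1 := by omega
    have h4 : ℓ ≤ 4 * (ℓ - m) := by omega
    obtain ⟨Φm, hdivm, hsuppm, hL1m, hL2m⟩ := ih m hmlt hm1
    set L : ℕ := 2 * ℓ - 1 with hLdef
    have hL : 1 ≤ L := by omega
    have hLle : (L : ℝ) ≤ 2 * (ℓ : ℝ) := by
      have : L ≤ 2 * ℓ := by omega
      exact_mod_cast this
    have hl0 : (0 : ℝ) < (ℓ : ℝ) := by positivity
    have hm0 : (0 : ℝ) < (m : ℝ) := by positivity
    have hpd0 : (0 : ℝ) < (ℓ : ℝ) ^ d := by positivity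
    set M : ℝ := 2 ^ (d + 1) / (ℓ : ℝ) ^ d with hMdef
    have hM0 : 0 ≤ M := by rw [hMdef]; positivity
    set f : (Fin d → ℤ) → ℝ := fun z => qConv d m z - qConv d ℓ z with hfdef
    have hsupp : ∀ w, ¬ inBox d L w → f w = 0 := by
      intro w hw
      have e1 : qConv d ℓ w = 0 := qConv_supp d hℓ hw
      have e2 : qConv d m w = 0 :=
        qConv_supp d hm1 fun hin => hw (inBox_mono d h2m1 hin)
      rw [hfdef]
      simp [e1, e2]
    have hsum : ∑ y ∈ boxF d L, f y = 0 := by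
      rw [hfdef]
      rw [Finset.sum_sub_distrib, sum_qConv d hm1 h2m1, sum_qConv d hℓ le_rfl, sub_self]
    have hM : ∀ w, |f w| ≤ M := by
      intro w
      show |qConv d m w - qConv d ℓ w| ≤ M
      have q1 := qConv_nonneg d m w
      have q2 := qConv_le d hm1 w
      have q3 := qConv_nonneg d ℓ w
      have q4 := qConv_le d hℓ w
      have hc : (ℓ : ℝ) ≤ 2 * (m : ℝ) := by exact_mod_cast hle2m
      have hmd : ((m : ℝ) ^ d)⁻¹ ≤ 2 ^ d / (ℓ : ℝ) ^ d := by
        rw [inv_eq_one_div, div_le_div_iff₀ (by positivity) hpd0]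
        calc (1 : ℝ) * (ℓ : ℝ) ^ d = (ℓ : ℝ) ^ d := one_mul _
          _ ≤ (2 * (m : ℝ)) ^ d := pow_le_pow_left₀ (le_of_lt hl0) hc d
          _ = 2 ^ d * (m : ℝ) ^ d := mul_pow _ _ _
      have hm2 : 2 ^ d / (ℓ : ℝ) ^ d ≤ M := by
        rw [hMdef]
        exact (div_le_div_iff_of_pos_right hpd0).2 (pow_le_pow_right₀ one_le_two (by omega))
      have hl2 : ((ℓ : ℝ) ^ d)⁻¹ ≤ M := by
        rw [hMdef, inv_eq_one_div]
        refine (div_le_div_iff_of_pos_right hpd0).2 ?_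
        calc (1 : ℝ) = 1 ^ (d + 1) := (one_pow _).symm
          _ ≤ 2 ^ (d + 1) := pow_le_pow_left₀ (by norm_num) one_le_two _
      rw [abs_le]
      constructor
      · linarith
      · linarith
    obtain ⟨Ψ, hdivΨ, hsuppΨ, hbndΨ⟩ := seqflow d L hL f M hsupp hsum hM
    set I : ℝ := ((ℓ : ℝ) ^ d)⁻¹ with hIdef
    have hI0 : 0 ≤ I := by rw [hIdef]; positivity
    have hPDI : (ℓ : ℝ) ^ d * I = 1 := mul_inv_cancel₀ (ne_of_gt hpd0)
    set S : ℝ := (L : ℝ) * M with hSdef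
    have hS0 : 0 ≤ S := by
      rw [hSdef, hMdef]; positivity
    set SB : ℝ := 2 ^ (d + 2) * (ℓ : ℝ) * I with hSBdef
    have hSB0 : 0 ≤ SB := by rw [hSBdef]; positivity
    have hSle : S ≤ SB := by
      rw [hSdef, hSBdef, hMdef, div_eq_mul_inv, ← hIdef]
      calc (L : ℝ) * (2 ^ (d + 1) * I) ≤ (2 * (ℓ : ℝ)) * (2 ^ (d + 1) * I) := by
            refine mul_le_mul_of_nonneg_right hLle (by positivity)
        _ = 2 ^ (d + 2) * (ℓ : ℝ) * I := by
            rw [pow_succ]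
            ring
    have hcard : ((boxF d L).card : ℝ) ≤ 2 ^ d * (ℓ : ℝ) ^ d := by
      rw [card_boxF]
      have h1 : L ^ d ≤ (2 * ℓ) ^ d := Nat.pow_le_pow_left (by omega) d
      calc ((L ^ d : ℕ) : ℝ) ≤ (((2 * ℓ) ^ d : ℕ) : ℝ) := by exact_mod_cast h1
        _ = 2 ^ d * (ℓ : ℝ) ^ d := by push_cast; rw [mul_pow]
    have hB : ∀ z, ¬ inBox d L z → ∀ i, Φm z i = 0 :=
      fun z hz i => hsuppm z (fun hin => hz (inBox_mono d h2m1 hin)) i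
    have hdimcast : ((Finset.univ : Finset (Fin d)).card : ℝ) = (d : ℝ) := by
      rw [Finset.card_univ, Fintype.card_fin]
    have hpow2 : ((2 : ℝ) ^ (d + 2)) ^ 2 = 2 ^ (2 * d + 4) := by
      rw [← pow_mul]
      congr 1
      omega
    have hpow3 : (2 : ℝ) ^ d * 2 ^ (2 * d + 4) = 2 ^ (3 * d + 4) := by
      rw [← pow_add]
      congr 1
      omega
    have hpow4 : (2 : ℝ) ^ d * 2 ^ (d + 2) = 2 ^ (2 * d + 2) := by
      rw [← pow_add]
      congr 1
      omega
    refine ⟨fun z i => Φm z i + Ψ z i, ?_, ?_, ?_, ?_⟩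
    · -- divergence
      intro z
      have e : (if z = 0 then (1 : ℝ) else 0) - qConv d ℓ z
          = ((if z = 0 then (1 : ℝ) else 0) - qConv d m z) + f z := by
        rw [hfdef]; ring
      rw [e, hdivm z, hdivΨ z, ← Finset.sum_add_distrib]
      refine Finset.sum_congr rfl fun i _ => ?_
      show Φm z i - Φm _ i + (Ψ z i - Ψ _ i)
          = Φm z i + Ψ z i - (Φm (fun j => z j - if j = i then 1 else 0) i
            + Ψ (fun j => z j - if j = i then 1 else 0) i)
      ring
    · -- support
      intro z hz i
      show Φm z i + Ψ z i = 0
      rw [hB z hz i, hsuppΨ z hz i, add_zero]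
    · -- ℓ¹ bound
      show ∑ i : Fin d, ∑' z, |Φm z i + Ψ z i| ≤ C1val d * (ℓ : ℝ)
      have e1 : ∀ i : Fin d, ∑' z, |Φm z i + Ψ z i| = ∑ z ∈ boxF d L, |Φm z i + Ψ z i| := by
        intro i
        refine tsum_box d _ fun z hz => ?_
        rw [hB z hz i, hsuppΨ z hz i, add_zero, abs_zero]
      have e2 : ∀ i : Fin d, ∑' z, |Φm z i| = ∑ z ∈ boxF d L, |Φm z i| := by
        intro i
        refine tsum_box d _ fun z hz => ?_
        rw [hB z hz i, abs_zero]
      have step1 : ∑ i : Fin d, ∑' z, |Φm z i + Ψ z i|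
          ≤ C1val d * m + (d : ℝ) * (((boxF d L).card : ℝ) * S) := by
        calc ∑ i : Fin d, ∑' z, |Φm z i + Ψ z i|
            = ∑ i : Fin d, ∑ z ∈ boxF d L, |Φm z i + Ψ z i| :=
              Finset.sum_congr rfl fun i _ => e1 i
          _ ≤ ∑ i : Fin d, (∑ z ∈ boxF d L, |Φm z i| + ∑ z ∈ boxF d L, |Ψ z i|) := by
              refine Finset.sum_le_sum fun i _ => ?_
              rw [← Finset.sum_add_distrib]
              exact Finset.sum_le_sum fun z _ => abs_add_le _ _
          _ = (∑ i : Fin d, ∑ z ∈ boxF d L, |Φm z i|)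
              + ∑ i : Fin d, ∑ z ∈ boxF d L, |Ψ z i| := Finset.sum_add_distrib
          _ ≤ C1val d * m + (d : ℝ) * (((boxF d L).card : ℝ) * S) := by
              refine add_le_add ?_ ?_
              · calc ∑ i : Fin d, ∑ z ∈ boxF d L, |Φm z i|
                    = ∑ i : Fin d, ∑' z, |Φm z i| :=
                      Finset.sum_congr rfl fun i _ => (e2 i).symm
                  _ ≤ C1val d * m := hL1m
              · calc ∑ i : Fin d, ∑ z ∈ boxF d L, |Ψ z i|
                    ≤ ∑ _i : Fin d, (((boxF d L).card : ℝ) * S) := by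
                      refine Finset.sum_le_sum fun i _ => ?_
                      have h := Finset.sum_le_card_nsmul (boxF d L) (fun z => |Ψ z i|) S
                        (fun z _ => hbndΨ z i)
                      rwa [nsmul_eq_mul] at h
                  _ = (d : ℝ) * (((boxF d L).card : ℝ) * S) := by
                      rw [Finset.sum_const, nsmul_eq_mul, hdimcast]
      have step2 : (d : ℝ) * (((boxF d L).card : ℝ) * S)
          ≤ (d : ℝ) * 2 ^ (2 * d + 2) * (ℓ : ℝ) := by
        calc (d : ℝ) * (((boxF d L).card : ℝ) * S)
            ≤ (d : ℝ) * ((2 ^ d * (ℓ : ℝ) ^ d) * SB) := by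
              refine mul_le_mul_of_nonneg_left ?_ (by positivity)
              exact mul_le_mul hcard hSle hS0 (by positivity)
          _ = (d : ℝ) * (2 ^ d * 2 ^ (d + 2)) * (ℓ : ℝ) * ((ℓ : ℝ) ^ d * I) := by
              rw [hSBdef]; ring
          _ = (d : ℝ) * 2 ^ (2 * d + 2) * (ℓ : ℝ) := by
              rw [hPDI, hpow4, mul_one]
      have hcast4 : (ℓ : ℝ) ≤ 4 * ((ℓ : ℝ) - (m : ℝ)) := by
        calc (ℓ : ℝ) ≤ ((4 * (ℓ - m) : ℕ) : ℝ) := by exact_mod_cast h4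
          _ = 4 * ((ℓ : ℝ) - (m : ℝ)) := by
              push_cast [Nat.cast_sub hmlt.le]
              ring
      have hC1eq : C1val d = 4 * ((d : ℝ) * 2 ^ (2 * d + 2)) := by
        unfold C1val
        rw [show 2 * d + 4 = (2 * d + 2) + 2 by omega, pow_add]
        ring
      have hX0 : (0 : ℝ) ≤ (d : ℝ) * 2 ^ (2 * d + 2) := by positivity
      calc ∑ i : Fin d, ∑' z, |Φm z i + Ψ z i|
          ≤ C1val d * m + (d : ℝ) * (((boxF d L).card : ℝ) * S) := step1
        _ ≤ C1val d * m + (d : ℝ) * 2 ^ (2 * d + 2) * (ℓ : ℝ) := by linarith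
        _ ≤ C1val d * ℓ := by nlinarith [hX0, hcast4, hC1eq]
    · -- ℓ² bound
      show ∑ i : Fin d, ∑' z, (Φm z i + Ψ z i) ^ 2 ≤ C2val d * Wfun d ℓ
      have e1 : ∀ i : Fin d, ∑' z, (Φm z i + Ψ z i) ^ 2
          = ∑ z ∈ boxF d L, (Φm z i + Ψ z i) ^ 2 := by
        intro i
        refine tsum_box d _ fun z hz => ?_
        rw [hB z hz i, hsuppΨ z hz i, add_zero]
        ring
      have e2 : ∀ i : Fin d, ∑' z, |Φm z i| = ∑ z ∈ boxF d L, |Φm z i| := by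
        intro i
        refine tsum_box d _ fun z hz => ?_
        rw [hB z hz i, abs_zero]
      have e3 : ∀ i : Fin d, ∑' z, (Φm z i) ^ 2 = ∑ z ∈ boxF d L, (Φm z i) ^ 2 := by
        intro i
        refine tsum_box d _ fun z hz => ?_
        rw [hB z hz i]
        ring
      have persum : ∀ i : Fin d, ∑ z ∈ boxF d L, (Φm z i + Ψ z i) ^ 2
          ≤ ∑ z ∈ boxF d L, (Φm z i) ^ 2 + (2 * S) * (∑ z ∈ boxF d L, |Φm z i|)
            + ((boxF d L).card : ℝ) * S ^ 2 := by
        intro i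
        have hz : ∀ z ∈ boxF d L, (Φm z i + Ψ z i) ^ 2
            ≤ (Φm z i) ^ 2 + 2 * S * |Φm z i| + S ^ 2 := by
          intro z _
          have h1 : |Ψ z i| ≤ S := hbndΨ z i
          have h1' := abs_le.1 h1
          have h2 : Φm z i * Ψ z i ≤ |Φm z i| * S := by
            calc Φm z i * Ψ z i ≤ |Φm z i * Ψ z i| := le_abs_self _
              _ = |Φm z i| * |Ψ z i| := abs_mul _ _
              _ ≤ |Φm z i| * S := mul_le_mul_of_nonneg_left h1 (abs_nonneg _)
          have h3 : (Ψ z i) ^ 2 ≤ S ^ 2 := sq_le_sq' (by linarith [h1'.1]) h1'.2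
          nlinarith [h2, h3]
        calc ∑ z ∈ boxF d L, (Φm z i + Ψ z i) ^ 2
            ≤ ∑ z ∈ boxF d L, ((Φm z i) ^ 2 + 2 * S * |Φm z i| + S ^ 2) :=
              Finset.sum_le_sum hz
          _ = ∑ z ∈ boxF d L, (Φm z i) ^ 2 + (2 * S) * (∑ z ∈ boxF d L, |Φm z i|)
              + ((boxF d L).card : ℝ) * S ^ 2 := by
              rw [Finset.sum_add_distrib, Finset.sum_add_distrib, Finset.sum_const,
                nsmul_eq_mul, ← Finset.mul_sum]
      have total : ∑ i : Fin d, ∑' z, (Φm z i + Ψ z i) ^ 2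
          ≤ C2val d * Wfun d m + (2 * S) * (C1val d * m)
            + (d : ℝ) * (((boxF d L).card : ℝ) * S ^ 2) := by
        calc ∑ i : Fin d, ∑' z, (Φm z i + Ψ z i) ^ 2
            = ∑ i : Fin d, ∑ z ∈ boxF d L, (Φm z i + Ψ z i) ^ 2 :=
              Finset.sum_congr rfl fun i _ => e1 i
          _ ≤ ∑ i : Fin d, (∑ z ∈ boxF d L, (Φm z i) ^ 2
              + (2 * S) * (∑ z ∈ boxF d L, |Φm z i|)
              + ((boxF d L).card : ℝ) * S ^ 2) :=
              Finset.sum_le_sum fun i _ => persum i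
          _ = (∑ i : Fin d, ∑ z ∈ boxF d L, (Φm z i) ^ 2)
              + (2 * S) * (∑ i : Fin d, ∑ z ∈ boxF d L, |Φm z i|)
              + (d : ℝ) * (((boxF d L).card : ℝ) * S ^ 2) := by
              rw [Finset.sum_add_distrib, Finset.sum_add_distrib, ← Finset.mul_sum,
                Finset.sum_const, nsmul_eq_mul, hdimcast]
          _ ≤ C2val d * Wfun d m + (2 * S) * (C1val d * m)
              + (d : ℝ) * (((boxF d L).card : ℝ) * S ^ 2) := by
              refine add_le_add (add_le_add ?_ ?_) le_rfl
              · calc ∑ i : Fin d, ∑ z ∈ boxF d L, (Φm z i) ^ 2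
                    = ∑ i : Fin d, ∑' z, (Φm z i) ^ 2 :=
                      Finset.sum_congr rfl fun i _ => (e3 i).symm
                  _ ≤ C2val d * Wfun d m := hL2m
              · refine mul_le_mul_of_nonneg_left ?_ (by positivity)
                calc ∑ i : Fin d, ∑ z ∈ boxF d L, |Φm z i|
                    = ∑ i : Fin d, ∑' z, |Φm z i| :=
                      Finset.sum_congr rfl fun i _ => (e2 i).symm
                  _ ≤ C1val d * m := hL1m
      have hm_le : (m : ℝ) ≤ (ℓ : ℝ) := by exact_mod_cast hmlt.le
      have extra1 : (2 * S) * (C1val d * m)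
          ≤ C1val d * 2 ^ (d + 3) * ((ℓ : ℝ) ^ 2 * I) := by
        have hC1m : C1val d * m ≤ C1val d * ℓ :=
          mul_le_mul_of_nonneg_left hm_le (C1val_nonneg d)
        calc (2 * S) * (C1val d * m) ≤ (2 * SB) * (C1val d * ℓ) :=
              mul_le_mul (by linarith) hC1m
                (mul_nonneg (C1val_nonneg d) (by positivity)) (by linarith)
          _ = C1val d * (2 ^ (d + 2) * 2) * ((ℓ : ℝ) ^ 2 * I) := by
              rw [hSBdef]; ring
          _ = C1val d * 2 ^ (d + 3) * ((ℓ : ℝ) ^ 2 * I) := by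
              rw [← pow_succ]
      have extra2 : (d : ℝ) * (((boxF d L).card : ℝ) * S ^ 2)
          ≤ (d : ℝ) * 2 ^ (3 * d + 4) * ((ℓ : ℝ) ^ 2 * I) := by
        calc (d : ℝ) * (((boxF d L).card : ℝ) * S ^ 2)
            ≤ (d : ℝ) * ((2 ^ d * (ℓ : ℝ) ^ d) * SB ^ 2) := by
              refine mul_le_mul_of_nonneg_left ?_ (by positivity)
              refine mul_le_mul hcard ?_ (by positivity) (by positivity)
              exact pow_le_pow_left₀ hS0 hSle 2
          _ = (d : ℝ) * (2 ^ d * ((2 : ℝ) ^ (d + 2)) ^ 2) * ((ℓ : ℝ) ^ 2 * I)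
              * ((ℓ : ℝ) ^ d * I) := by
              rw [hSBdef]; ring
          _ = (d : ℝ) * (2 ^ d * 2 ^ (2 * d + 4)) * ((ℓ : ℝ) ^ 2 * I) * 1 := by
              rw [hpow2, hPDI]
          _ = (d : ℝ) * 2 ^ (3 * d + 4) * ((ℓ : ℝ) ^ 2 * I) := by
              rw [hpow3, mul_one]
      have hWstep : Wfun d ℓ = Wfun d m + (ℓ : ℝ) ^ 2 / (ℓ : ℝ) ^ d := Wfun_step h2
      calc ∑ i : Fin d, ∑' z, (Φm z i + Ψ z i) ^ 2
          ≤ C2val d * Wfun d m + (2 * S) * (C1val d * m)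
            + (d : ℝ) * (((boxF d L).card : ℝ) * S ^ 2) := total
        _ ≤ C2val d * Wfun d m + C1val d * 2 ^ (d + 3) * ((ℓ : ℝ) ^ 2 * I)
            + (d : ℝ) * 2 ^ (3 * d + 4) * ((ℓ : ℝ) ^ 2 * I) := by linarith
        _ = C2val d * (Wfun d m + (ℓ : ℝ) ^ 2 * I) := by
            unfold C2val
            ring
        _ = C2val d * Wfun d ℓ := by
            rw [hWstep, div_eq_mul_inv, hIdef]

end Flow

theorem flow_decomposition (d : ℕ) (hd : 1 ≤ d) :
    ∃ C₀ : ℝ, 0 < C₀ ∧ ∀ ℓ : ℕ, 1 ≤ ℓ →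
      ∃ Φ : (Fin d → ℤ) → Fin d → ℝ,
        (∀ z : Fin d → ℤ,
          (if z = 0 then (1 : ℝ) else 0) - qConv d ℓ z
            = ∑ i : Fin d, (Φ z i - Φ (fun j => z j - if j = i then 1 else 0) i)) ∧
        (∀ z : Fin d → ℤ, ¬ inBox d (2 * ℓ - 1) z → ∀ i : Fin d, Φ z i = 0) ∧
        (∑ i : Fin d, ∑' z : Fin d → ℤ, (Φ z i) ^ 2) ≤ C₀ * gd d ℓ := by
  refine ⟨12 * C2val d + 1, ?_, ?_⟩
  · have h := Flow.C2val_nonneg d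
    linarith
  · intro ℓ hℓ
    obtain ⟨Φ, h1, h2, h3, h4⟩ := Flow.main_ind d hd ℓ hℓ
    refine ⟨Φ, h1, h2, ?_⟩
    have hW := Flow.Wfun_le_gd d hd ℓ hℓ
    have hg := Flow.gd_nonneg d ℓ hℓ
    have hC2 := Flow.C2val_nonneg d
    calc ∑ i : Fin d, ∑' z : Fin d → ℤ, (Φ z i) ^ 2
        ≤ C2val d * Flow.Wfun d ℓ := h4
      _ ≤ C2val d * (12 * gd d ℓ) := mul_le_mul_of_nonneg_left hW hC2
      _ ≤ (12 * C2val d + 1) * gd d ℓ := by nlinarith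
end
end

section
/- Let d ≥ 1, β > 0 and let (a_n) be a sequence of positive reals satisfying Assumption 2.1. Then there exists a sequence of integers ℓ = ℓ(n) with 1 ≤ ℓ(n) ≤ n such that ℓ(n)^d g_d(ℓ(n)) / n^{2β} → 0 and n^{2d} / (a_n² ℓ(n)^d) → 0 as n → ∞. -/
open Filter
open scoped Topology

noncomputable section

namespace MesoAux

lemma tendsto_inv_rpow (c : ℝ) (hc : 0 < c) :
    Tendsto (fun n : ℕ => ((n : ℝ) ^ c)⁻¹) atTop (𝓝 0) :=
  ((tendsto_rpow_atTop hc).comp tendsto_natCast_atTop_atTop).inv_tendsto_atTop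

lemma tendsto_log_div_rpow (c : ℝ) (hc : 0 < c) :
    Tendsto (fun n : ℕ => Real.log n / (n : ℝ) ^ c) atTop (𝓝 0) :=
  ((isLittleO_log_rpow_atTop hc).tendsto_div_nhds_zero).comp tendsto_natCast_atTop_atTop

lemma ev_log_ge_one : ∀ᶠ n : ℕ in atTop, 1 ≤ Real.log n := by
  filter_upwards [eventually_ge_atTop 3] with n hn
  have hn0 : (0 : ℝ) < n := Nat.cast_pos.mpr (by omega)
  rw [Real.le_log_iff_exp_le hn0]
  have h3 : (3 : ℝ) ≤ n := by exact_mod_cast hn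
  linarith [Real.exp_one_lt_d9]

/-- common consequence of `h1`: `n^d / a_n² → 0`. -/
lemma tendsto_pow_div_sq (d : ℕ) (a : ℕ → ℝ) (ha : ∀ n, 0 < a n)
    (h1 : Tendsto (fun n : ℕ => (n : ℝ) ^ ((d : ℝ) / 2) * Real.sqrt (Real.log n) / a n)
      atTop (𝓝 0)) :
    Tendsto (fun n : ℕ => (n : ℝ) ^ (d : ℝ) / a n ^ 2) atTop (𝓝 0) := by
  have hsq : Tendsto (fun n : ℕ => (n : ℝ) ^ (d : ℝ) * Real.log n / a n ^ 2) atTop (𝓝 0) := by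
    have h := h1.mul h1
    rw [mul_zero] at h
    apply h.congr'
    filter_upwards [eventually_ge_atTop 1, ev_log_ge_one] with n hn hlog
    have hn0 : (0 : ℝ) < n := Nat.cast_pos.mpr hn
    have hl0 : (0 : ℝ) ≤ Real.log n := by linarith
    have hdd : (n : ℝ) ^ ((d : ℝ) / 2) * (n : ℝ) ^ ((d : ℝ) / 2) = (n : ℝ) ^ (d : ℝ) := by
      rw [← Real.rpow_add hn0]; ring_nf
    rw [div_mul_div_comm, mul_mul_mul_comm, hdd, Real.mul_self_sqrt hl0, ← sq]
  apply squeeze_zero' ?_ ?_ hsq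
  · filter_upwards with n
    positivity
  · filter_upwards [ev_log_ge_one] with n hlog
    nth_rewrite 1 [← mul_one ((n : ℝ) ^ (d : ℝ))]
    gcongr

def ellOf (X : ℕ → ℝ) (n : ℕ) : ℕ := min n ⌈X n⌉₊

lemma ellOf_bounds {X : ℕ → ℝ} {n : ℕ} (hn : 1 ≤ n) (hX : 0 < X n) :
    1 ≤ ellOf X n ∧ ellOf X n ≤ n :=
  ⟨le_min hn (Nat.ceil_pos.mpr hX), min_le_left _ _⟩

lemma ellOf_le_cast {X : ℕ → ℝ} (n : ℕ) (hX : 0 ≤ X n) :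
    (ellOf X n : ℝ) ≤ X n + 1 := by
  calc (ellOf X n : ℝ) ≤ (⌈X n⌉₊ : ℝ) := Nat.cast_le.mpr (min_le_right _ _)
  _ ≤ X n + 1 := (Nat.ceil_lt_add_one hX).le

lemma bound_lemma (d : ℕ) (hd : 1 ≤ d) (β : ℝ) (hβ : 0 < β)
    (a X G : ℕ → ℝ) (ha : ∀ n, 0 < a n) (hX : ∀ n, 1 ≤ n → 0 < X n)
    (hG : ∀ᶠ n in atTop, 0 ≤ gd d (ellOf X n) ∧ gd d (ellOf X n) ≤ G n)
    (hA : Tendsto (fun n : ℕ => (X n + 1) ^ d * G n / (n : ℝ) ^ (2 * β)) atTop (𝓝 0))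
    (hB1 : Tendsto (fun n : ℕ => (n : ℝ) ^ (d : ℝ) / a n ^ 2) atTop (𝓝 0))
    (hB2 : Tendsto (fun n : ℕ => (n : ℝ) ^ (2 * (d : ℝ)) / (a n ^ 2 * X n ^ d)) atTop (𝓝 0)) :
    Tendsto (fun n : ℕ => (ellOf X n : ℝ) ^ (d : ℝ) * gd d (ellOf X n) / (n : ℝ) ^ (2 * β))
        atTop (𝓝 0) ∧
    Tendsto (fun n : ℕ => (n : ℝ) ^ (2 * (d : ℝ)) / (a n ^ 2 * (ellOf X n : ℝ) ^ (d : ℝ)))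
        atTop (𝓝 0) := by
  constructor
  · apply squeeze_zero' ?_ ?_ hA
    · filter_upwards [hG] with n hg
      exact div_nonneg (mul_nonneg (Real.rpow_nonneg (Nat.cast_nonneg _) _) hg.1)
        (Real.rpow_nonneg (Nat.cast_nonneg _) _)
    · filter_upwards [hG, eventually_ge_atTop 1] with n hg hn
      rw [Real.rpow_natCast]
      have hle : (ellOf X n : ℝ) ≤ X n + 1 := ellOf_le_cast n (hX n hn).le
      have hXp : (0 : ℝ) ≤ X n + 1 := by linarith [(hX n hn)]
      have hden : (0 : ℝ) ≤ (n : ℝ) ^ (2 * β) := Real.rpow_nonneg (Nat.cast_nonneg _) _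
      have hn0 : (0 : ℝ) < n := Nat.cast_pos.mpr hn
      have hden2 : (0 : ℝ) < (n : ℝ) ^ (2 * β) := Real.rpow_pos_of_pos hn0 _
      have hnum : (ellOf X n : ℝ) ^ d * gd d (ellOf X n) ≤ (X n + 1) ^ d * G n :=
        mul_le_mul (pow_le_pow_left₀ (Nat.cast_nonneg _) hle d) hg.2 hg.1 (pow_nonneg hXp d)
      exact (div_le_div_iff_of_pos_right hden2).mpr hnum
  · apply squeeze_zero' ?_ ?_ (by simpa using hB1.max hB2)
    · filter_upwards with n
      have : (0:ℝ) ≤ (ellOf X n : ℝ) ^ (d : ℝ) := Real.rpow_nonneg (Nat.cast_nonneg _) _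
      positivity
    · filter_upwards [eventually_ge_atTop 1] with n hn
      have hn0 : (0 : ℝ) < n := Nat.cast_pos.mpr hn
      have hXn := hX n hn
      rcases le_total (X n) (n : ℝ) with hc | hc
      · refine le_trans ?_ (le_max_right _ _)
        have hXle : X n ≤ (ellOf X n : ℝ) := by
          have : X n ≤ (⌈X n⌉₊ : ℝ) := Nat.le_ceil _
          simp only [ellOf, Nat.cast_min]
          exact le_min hc this
        have : X n ^ d ≤ (ellOf X n : ℝ) ^ (d : ℝ) := by
          rw [Real.rpow_natCast]
          exact pow_le_pow_left₀ hXn.le hXle d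
        gcongr
        · exact mul_pos (pow_pos (ha n) 2) (pow_pos hXn d)
      · refine le_trans ?_ (le_max_left _ _)
        have hell : ellOf X n = n := by
          apply min_eq_left
          have : (n : ℝ) ≤ (⌈X n⌉₊ : ℝ) := le_trans hc (Nat.le_ceil _)
          exact_mod_cast this
        apply le_of_eq
        rw [hell, show (2 : ℝ) * (d : ℝ) = (d : ℝ) + (d : ℝ) by ring, Real.rpow_add hn0]
        have hnd : ((n : ℝ) ^ (d : ℝ)) ≠ 0 := (Real.rpow_pos_of_pos hn0 _).ne'
        have ha0 : a n ≠ 0 := (ha n).ne'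
        field_simp
        ring
        exact Real.rpow_natCast _ _

end MesoAux

open MesoAux in
theorem exists_mesoscopic_scale (d : ℕ) (hd : 1 ≤ d) (β : ℝ) (hβ : 0 < β)
    (a : ℕ → ℝ) (ha : ∀ n, 0 < a n)
    -- Assumption 2.1, first part: `n^{d/2} √(log n) ≪ a_n ≪ min (n^d, n^{d+β-1})`
    (h1 : Tendsto (fun n : ℕ => (n : ℝ) ^ ((d : ℝ) / 2) * Real.sqrt (Real.log n) / a n)
      atTop (𝓝 0))
    (h2 : Tendsto (fun n : ℕ => a n / min ((n : ℝ) ^ (d : ℝ)) ((n : ℝ) ^ ((d : ℝ) + β - 1)))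
      atTop (𝓝 0))
    -- Assumption 2.1, case `d = 1`
    (h3 : d = 1 → 2 / 3 < β ∧
      Tendsto (fun n : ℕ => (n : ℝ) ^ (1 - β / 2) / a n) atTop (𝓝 0))
    -- Assumption 2.1, case `d = 2`
    (h4 : d = 2 → 1 / 2 < β ∧ ∃ ε₀ : ℝ, 0 < ε₀ ∧ ε₀ < 1 ∧
      Tendsto (fun n : ℕ => (n : ℝ) ^ (2 - β) * Real.log n ^ (1 / (1 - ε₀)) / a n)
        atTop (𝓝 0))
    -- Assumption 2.1, case `d ≥ 3`
    (h5 : 3 ≤ d → 1 / 2 < β ∧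
      Tendsto (fun n : ℕ => (n : ℝ) ^ ((d : ℝ) - β) / a n) atTop (𝓝 0)) :
    ∃ ℓ : ℕ → ℕ, (∀ n : ℕ, 1 ≤ n → 1 ≤ ℓ n ∧ ℓ n ≤ n) ∧
      Tendsto (fun n : ℕ => (ℓ n : ℝ) ^ (d : ℝ) * gd d (ℓ n) / (n : ℝ) ^ (2 * β))
        atTop (𝓝 0) ∧
      Tendsto (fun n : ℕ => (n : ℝ) ^ (2 * (d : ℝ)) / (a n ^ 2 * (ℓ n : ℝ) ^ (d : ℝ)))
        atTop (𝓝 0) := by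
  have hB1 := MesoAux.tendsto_pow_div_sq d a ha h1
  obtain hd1 | hd2 | hd3 : d = 1 ∨ d = 2 ∨ 3 ≤ d := by omega
  · -- d = 1
    subst hd1
    obtain ⟨hβ23, h3'⟩ := h3 rfl
    set X : ℕ → ℝ := fun n => (n : ℝ) ^ (1 + β / 2) / a n with hXdef
    have hXpos : ∀ n, 1 ≤ n → 0 < X n := fun n hn =>
      div_pos (Real.rpow_pos_of_pos (Nat.cast_pos.mpr hn) _) (ha n)
    -- s1 : X n / n^β → 0
    have hs1 : Tendsto (fun n : ℕ => X n / (n : ℝ) ^ β) atTop (𝓝 0) := by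
      apply h3'.congr'
      filter_upwards [eventually_ge_atTop 1] with n hn
      have hn0 : (0 : ℝ) < n := Nat.cast_pos.mpr hn
      have hb : ((n : ℝ) ^ β) ≠ 0 := (Real.rpow_pos_of_pos hn0 _).ne'
      have ha0 : a n ≠ 0 := (ha n).ne'
      simp only [hXdef]
      have : (n : ℝ) ^ (1 + β / 2) = (n : ℝ) ^ (1 - β / 2) * (n : ℝ) ^ β := by
        rw [← Real.rpow_add hn0]; ring_nf
      rw [this]
      field_simp
    have hs2 : Tendsto (fun n : ℕ => ((n : ℝ) ^ β)⁻¹) atTop (𝓝 0) := tendsto_inv_rpow β hβ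
    have hA : Tendsto (fun n : ℕ => (X n + 1) ^ 1 * (X n + 1) / (n : ℝ) ^ (2 * β))
        atTop (𝓝 0) := by
      have h := (hs1.add hs2).pow 2
      rw [show ((0:ℝ) + (0:ℝ)) ^ 2 = 0 by norm_num] at h
      apply h.congr'
      filter_upwards [eventually_ge_atTop 1] with n hn
      have hn0 : (0 : ℝ) < n := Nat.cast_pos.mpr hn
      have hb : ((n : ℝ) ^ β) ≠ 0 := (Real.rpow_pos_of_pos hn0 _).ne'
      have h2b : (n : ℝ) ^ (2 * β) = (n : ℝ) ^ β * (n : ℝ) ^ β := by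
        rw [← Real.rpow_add hn0]; ring_nf
      rw [h2b]
      field_simp
    have hB2 : Tendsto (fun n : ℕ => (n : ℝ) ^ (2 * ((1:ℕ) : ℝ)) / (a n ^ 2 * X n ^ 1))
        atTop (𝓝 0) := by
      apply h3'.congr'
      filter_upwards [eventually_ge_atTop 1] with n hn
      have hn0 : (0 : ℝ) < n := Nat.cast_pos.mpr hn
      have ha0 : a n ≠ 0 := (ha n).ne'
      have hb : ((n : ℝ) ^ (1 + β/2)) ≠ 0 := (Real.rpow_pos_of_pos hn0 _).ne'
      simp only [hXdef]
      simp only [pow_one, Nat.cast_one]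
      have h2b : (n : ℝ) ^ (2 * (1:ℝ)) = (n : ℝ) ^ (1 - β / 2) * (n : ℝ) ^ (1 + β / 2) := by
        rw [← Real.rpow_add hn0]; ring_nf
      rw [h2b]
      field_simp
    have hG : ∀ᶠ n in atTop, 0 ≤ gd 1 (ellOf X n) ∧ gd 1 (ellOf X n) ≤ X n + 1 := by
      filter_upwards [eventually_ge_atTop 1] with n hn
      have := ellOf_le_cast (X := X) n (hXpos n hn).le
      constructor
      · simp [gd]
      · simpa [gd] using this
    obtain ⟨hcA, hcB⟩ := bound_lemma 1 le_rfl β hβ a X (fun n => X n + 1) ha hXpos hG hA hB1 hB2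
    exact ⟨ellOf X, fun n hn => ellOf_bounds hn (hXpos n hn), hcA, hcB⟩
  · -- d = 2
    subst hd2
    obtain ⟨hβ12, ε₀, hε0, hε1, h4'⟩ := h4 rfl
    set M : ℕ → ℝ := fun n => max 1 (Real.log n) with hMdef
    have hM1 : ∀ n : ℕ, (1:ℝ) ≤ M n := fun n => le_max_left _ _
    have hMpos : ∀ n : ℕ, (0:ℝ) < M n := fun n => lt_of_lt_of_le one_pos (hM1 n)
    set SM : ℕ → ℝ := fun n => Real.sqrt (M n) with hSMdef
    have hSMpos : ∀ n : ℕ, 0 < SM n := fun n => Real.sqrt_pos.mpr (hMpos n)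
    set X : ℕ → ℝ := fun n => Real.sqrt ((n:ℝ) ^ ((2:ℝ) + β) / (a n * SM n)) with hXdef
    have hTpos : ∀ n : ℕ, 1 ≤ n → 0 < (n:ℝ) ^ ((2:ℝ) + β) / (a n * SM n) := fun n hn =>
      div_pos (Real.rpow_pos_of_pos (Nat.cast_pos.mpr hn) _) (mul_pos (ha n) (hSMpos n))
    have hXpos : ∀ n : ℕ, 1 ≤ n → 0 < X n := fun n hn => Real.sqrt_pos.mpr (hTpos n hn)
    have hXsq : ∀ n : ℕ, 1 ≤ n → X n ^ 2 = (n:ℝ) ^ ((2:ℝ) + β) / (a n * SM n) := fun n hn =>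
      Real.sq_sqrt (hTpos n hn).le
    have hpow : ∀ n : ℕ, 1 ≤ n → ((n:ℝ) ^ β) ^ 2 = (n:ℝ) ^ (2 * β) := by
      intro n hn
      have hn0 : (0 : ℝ) < n := Nat.cast_pos.mpr hn
      rw [← Real.rpow_natCast ((n:ℝ) ^ β) 2, ← Real.rpow_mul hn0.le]
      norm_num
      ring_nf
    -- key limit: n^{2-β}·√(M n)/a n → 0
    have hs : Tendsto (fun n : ℕ => (n:ℝ) ^ ((2:ℝ) - β) * SM n / a n) atTop (𝓝 0) := by
      apply squeeze_zero' ?_ ?_ h4'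
      · filter_upwards with n
        have h1' := (ha n); have h2' := (hSMpos n)
        positivity
      · filter_upwards [ev_log_ge_one] with n hlog
        have hMeq : M n = Real.log n := max_eq_right hlog
        have hexp : ((1:ℝ)/2) ≤ 1/(1-ε₀) := by
          rw [div_le_div_iff₀ (by norm_num) (by linarith)]
          linarith
        have hsm : SM n ≤ Real.log n ^ ((1:ℝ)/(1-ε₀)) := by
          rw [hSMdef]
          simp only [hMeq, Real.sqrt_eq_rpow]
          exact Real.rpow_le_rpow_of_exponent_le hlog hexp
        have hnum : (n:ℝ) ^ ((2:ℝ) - β) * SM n ≤ (n:ℝ) ^ ((2:ℝ) - β) * Real.log n ^ ((1:ℝ)/(1-ε₀)) :=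
          mul_le_mul_of_nonneg_left hsm (Real.rpow_nonneg (Nat.cast_nonneg n) _)
        have := (div_le_div_iff_of_pos_right (ha n)).mpr hnum
        convert this using 2 <;> norm_num
    -- s2 : √(M n)/n^β → 0
    have hM0 : Tendsto (fun n : ℕ => M n / (n:ℝ) ^ (2*β)) atTop (𝓝 0) := by
      apply (tendsto_log_div_rpow (2*β) (by positivity)).congr'
      filter_upwards [ev_log_ge_one] with n hlog
      rw [hMdef]
      simp only [max_eq_right hlog]
    have hs2 : Tendsto (fun n : ℕ => SM n / (n:ℝ) ^ β) atTop (𝓝 0) := by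
      have h := hM0.sqrt
      rw [Real.sqrt_zero] at h
      apply h.congr'
      filter_upwards [eventually_ge_atTop 1] with n hn
      have hn0 : (0 : ℝ) < n := Nat.cast_pos.mpr hn
      rw [← hpow n hn, Real.sqrt_div (hMpos n).le, Real.sqrt_sq (Real.rpow_nonneg (Nat.cast_nonneg n) _)]
    -- s1 : X n · √(M n)/n^β → 0
    have hs1 : Tendsto (fun n : ℕ => X n * SM n / (n:ℝ) ^ β) atTop (𝓝 0) := by
      have h := hs.sqrt
      rw [Real.sqrt_zero] at h
      apply h.congr'
      filter_upwards [eventually_ge_atTop 1] with n hn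
      have hn0 : (0 : ℝ) < n := Nat.cast_pos.mpr hn
      have key : (X n * SM n / (n:ℝ) ^ β) ^ 2 = (n:ℝ) ^ ((2:ℝ) - β) * SM n / a n := by
        rw [div_pow, mul_pow, hXsq n hn, hpow n hn]
        have hM : SM n ^ 2 = M n := Real.sq_sqrt (hMpos n).le
        have hMM : M n = SM n * SM n := by rw [← hM]; ring
        have h2d : (n:ℝ) ^ ((2:ℝ) + β) = (n:ℝ) ^ ((2:ℝ) - β) * (n:ℝ) ^ (2 * β) := by
          rw [← Real.rpow_add hn0]; ring_nf
        have ha0 : a n ≠ 0 := (ha n).ne'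
        have hsm0 : SM n ≠ 0 := (hSMpos n).ne'
        have hnb : ((n:ℝ) ^ (2*β)) ≠ 0 := (Real.rpow_pos_of_pos hn0 _).ne'
        rw [hM, hMM, h2d]
        field_simp
      rw [← key, Real.sqrt_sq (by positivity)]
    -- assemble hA
    have hA : Tendsto (fun n : ℕ => (X n + 1) ^ 2 * M n / (n:ℝ) ^ (2*β)) atTop (𝓝 0) := by
      have h := (hs1.add hs2).pow 2
      rw [show ((0:ℝ) + (0:ℝ)) ^ 2 = 0 by norm_num] at h
      apply h.congr'
      filter_upwards [eventually_ge_atTop 1] with n hn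
      have hn0 : (0 : ℝ) < n := Nat.cast_pos.mpr hn
      have hstep : X n * SM n / (n:ℝ) ^ β + SM n / (n:ℝ) ^ β = (X n + 1) * SM n / (n:ℝ) ^ β := by
        ring
      rw [hstep, div_pow, mul_pow, hpow n hn, Real.sq_sqrt (hMpos n).le]
    have hB2 : Tendsto (fun n : ℕ => (n : ℝ) ^ (2 * ((2:ℕ) : ℝ)) / (a n ^ 2 * X n ^ 2))
        atTop (𝓝 0) := by
      apply hs.congr'
      filter_upwards [eventually_ge_atTop 1] with n hn
      have hn0 : (0 : ℝ) < n := Nat.cast_pos.mpr hn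
      have ha0 : a n ≠ 0 := (ha n).ne'
      have hsm0 : SM n ≠ 0 := (hSMpos n).ne'
      have hb : ((n : ℝ) ^ ((2:ℝ) + β)) ≠ 0 := (Real.rpow_pos_of_pos hn0 _).ne'
      rw [hXsq n hn]
      have h2d : (n : ℝ) ^ (2 * ((2:ℕ) : ℝ)) = (n : ℝ) ^ ((2:ℝ) - β) * (n : ℝ) ^ ((2:ℝ) + β) := by
        rw [← Real.rpow_add hn0]
        norm_num
      rw [h2d]
      field_simp
    have hG : ∀ᶠ n in atTop, 0 ≤ gd 2 (ellOf X n) ∧ gd 2 (ellOf X n) ≤ M n := by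
      filter_upwards [eventually_ge_atTop 1] with n hn
      obtain ⟨hl1, hln⟩ := ellOf_bounds hn (hXpos n hn)
      have hgd : gd 2 (ellOf X n) = Real.log (ellOf X n) := by simp [gd]
      rw [hgd]
      constructor
      · exact Real.log_nonneg (by exact_mod_cast hl1)
      · calc Real.log (ellOf X n) ≤ Real.log n :=
              Real.log_le_log (by exact_mod_cast hl1) (by exact_mod_cast hln)
        _ ≤ M n := le_max_right _ _
    obtain ⟨hcA, hcB⟩ := bound_lemma 2 (by norm_num) β hβ a X M ha hXpos hG hA hB1 hB2
    exact ⟨ellOf X, fun n hn => ellOf_bounds hn (hXpos n hn), hcA, hcB⟩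
  · -- d ≥ 3
    obtain ⟨hβ12, h5'⟩ := h5 hd3
    have hd0 : ((d:ℝ)) ≠ 0 := by
      have : (3:ℝ) ≤ (d:ℝ) := by exact_mod_cast hd3
      linarith
    set X : ℕ → ℝ := fun n => ((n : ℝ) ^ ((d : ℝ) + β) / a n) ^ ((d : ℝ)⁻¹) with hXdef
    have hXpos : ∀ n, 1 ≤ n → 0 < X n := fun n hn =>
      Real.rpow_pos_of_pos
        (div_pos (Real.rpow_pos_of_pos (Nat.cast_pos.mpr hn) _) (ha n)) _
    have hXd : ∀ n : ℕ, 1 ≤ n → X n ^ d = (n : ℝ) ^ ((d : ℝ) + β) / a n := by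
      intro n hn
      have hT : (0:ℝ) ≤ (n : ℝ) ^ ((d : ℝ) + β) / a n :=
        (div_pos (Real.rpow_pos_of_pos (Nat.cast_pos.mpr hn) _) (ha n)).le
      rw [hXdef]
      rw [← Real.rpow_natCast (((n : ℝ) ^ ((d : ℝ) + β) / a n) ^ ((d : ℝ)⁻¹)) d,
        ← Real.rpow_mul hT, inv_mul_cancel₀ hd0, Real.rpow_one]
    set c : ℝ := 2 * β * (d : ℝ)⁻¹ with hcdef
    have hc : 0 < c := by
      have : (0:ℝ) < (d:ℝ)⁻¹ := by
        have : (3:ℝ) ≤ (d:ℝ) := by exact_mod_cast hd3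
        positivity
      positivity
    have hs1 : Tendsto (fun n : ℕ => X n / (n : ℝ) ^ c) atTop (𝓝 0) := by
      have h := h5'.rpow_const (p := (d:ℝ)⁻¹) (Or.inr (inv_nonneg.mpr (Nat.cast_nonneg d)))
      rw [Real.zero_rpow (inv_ne_zero hd0)] at h
      apply h.congr'
      filter_upwards [eventually_ge_atTop 1] with n hn
      have hn0 : (0 : ℝ) < n := Nat.cast_pos.mpr hn
      have hstep : (n : ℝ) ^ ((d : ℝ) - β) / a n
          = ((n : ℝ) ^ ((d : ℝ) + β) / a n) / (n : ℝ) ^ (2 * β) := by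
        have : (n : ℝ) ^ ((d : ℝ) + β) = (n : ℝ) ^ ((d : ℝ) - β) * (n : ℝ) ^ (2 * β) := by
          rw [← Real.rpow_add hn0]; ring_nf
        have hb2 : ((n : ℝ) ^ (2 * β)) ≠ 0 := (Real.rpow_pos_of_pos hn0 _).ne'
        have ha0 : a n ≠ 0 := (ha n).ne'
        rw [this]
        field_simp
      rw [hstep, Real.div_rpow
          (le_of_lt (div_pos (Real.rpow_pos_of_pos hn0 _) (ha n)))
          (Real.rpow_nonneg (Nat.cast_nonneg n) _), hXdef]
      congr 1
      rw [← Real.rpow_mul hn0.le]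
    have hs2 : Tendsto (fun n : ℕ => ((n : ℝ) ^ c)⁻¹) atTop (𝓝 0) := tendsto_inv_rpow c hc
    have hA : Tendsto (fun n : ℕ => (X n + 1) ^ d * (1:ℝ) / (n : ℝ) ^ (2 * β))
        atTop (𝓝 0) := by
      have h := (hs1.add hs2).pow d
      rw [show ((0:ℝ) + (0:ℝ)) = 0 by norm_num, zero_pow (by omega : d ≠ 0)] at h
      apply h.congr'
      filter_upwards [eventually_ge_atTop 1] with n hn
      have hn0 : (0 : ℝ) < n := Nat.cast_pos.mpr hn
      have hcd : ((n : ℝ) ^ c) ^ d = (n : ℝ) ^ (2 * β) := by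
        rw [← Real.rpow_natCast ((n:ℝ) ^ c) d, ← Real.rpow_mul hn0.le, hcdef,
          mul_assoc, inv_mul_cancel₀ hd0, mul_one]
      rw [div_add' _ _ _ (Real.rpow_pos_of_pos hn0 c).ne', div_pow, hcd, mul_one,
        inv_mul_cancel₀ (Real.rpow_pos_of_pos hn0 c).ne']
    have hB2 : Tendsto (fun n : ℕ => (n : ℝ) ^ (2 * (d : ℝ)) / (a n ^ 2 * X n ^ d))
        atTop (𝓝 0) := by
      apply h5'.congr'
      filter_upwards [eventually_ge_atTop 1] with n hn
      have hn0 : (0 : ℝ) < n := Nat.cast_pos.mpr hn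
      have ha0 : a n ≠ 0 := (ha n).ne'
      rw [hXd n hn]
      have h2d : (n : ℝ) ^ (2 * (d : ℝ)) = (n : ℝ) ^ ((d : ℝ) - β) * (n : ℝ) ^ ((d : ℝ) + β) := by
        rw [← Real.rpow_add hn0]; ring_nf
      have hb : ((n : ℝ) ^ ((d : ℝ) + β)) ≠ 0 := (Real.rpow_pos_of_pos hn0 _).ne'
      rw [h2d]
      field_simp
    have hG : ∀ᶠ n in atTop, 0 ≤ gd d (ellOf X n) ∧ gd d (ellOf X n) ≤ (1:ℝ) := by
      filter_upwards with n
      have hgd : gd d (ellOf X n) = 1 := by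
        unfold gd
        rw [if_neg (by omega : ¬ d = 1), if_neg (by omega : ¬ d = 2)]
      rw [hgd]
      norm_num
    obtain ⟨hcA, hcB⟩ := bound_lemma d hd β hβ a X (fun _ => (1:ℝ)) ha hXpos hG hA hB1 hB2
    exact ⟨ellOf X, fun n hn => ellOf_bounds hn (hXpos n hn), hcA, hcB⟩
end
end
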